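/- arXiv:1311.7063 — 2 statements merged into one kernel-verified Lean document; each statement's English description precedes it below -/
import Mathlib

section
/- Let p, q ∈ [0,1] and let X₁, ..., Xₙ be {0,1}-valued random variables with X := Σᵢ Xᵢ. If for each 1 ≤ i ≤ n we have E[Xᵢ | X₁, ..., X_{i-1}] ≥ p and E[Xᵢ | X₁, ..., X_{i-1}] ≤ q (almost surely), then for every 0 < α < 1: Pr[X ≥ (1+α)nq] ≤ exp(−α²nq/3) and Pr[X ≤ (1−α)np] ≤ exp(−α²np/2). -/
/-!
For `Xᵢ ∈ {0,1}` we have `exp (t Xᵢ) = 1 + (eᵗ - 1) Xᵢ`. Pulling the factor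
`exp (t ∑_{j<i} Xⱼ)`, which is measurable with respect to the past, out of the conditional
expectation of `Xᵢ` shows inductively that the moment generating function of `X = ∑ Xᵢ` at `t` is
at most `exp (n (eᵗ - 1) r)` as soon as `(eᵗ - 1) E[Xᵢ | X₀, …, X_{i-1}] ≤ (eᵗ - 1) r`.
Markov's inequality with `t = log (1 + α)`, `r = q`, resp. `t = log (1 - α)`, `r = p`, then gives
both tails, using `(1 + α) log (1 + α) ≥ α + α² / 3` (from `log (1 + x) ≥ 2x / (2 + x)`, the first
term of the series of `log (1 + 1/a)`) and `(1 - α) log (1 - α) ≥ -α + α² / 2` (from `sinh u ≤ u`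
for `u ≤ 0`).
-/

open MeasureTheory ProbabilityTheory Finset Real

namespace Real

theorem two_mul_div_two_add_le_log_one_add {x : ℝ} (hx : 0 < x) :
    2 * x / (2 + x) ≤ log (1 + x) := by
  have h := le_hasSum (hasSum_log_one_add_inv (inv_pos.mpr hx)) 0 fun k _ => by positivity
  rw [inv_inv] at h
  refine Eq.trans_le ?_ h
  simp only [Nat.cast_zero, mul_zero, zero_add, pow_one]
  field_simp

theorem sub_inv_div_two_le_log {x : ℝ} (hx0 : 0 < x) (hx1 : x ≤ 1) : (x - x⁻¹) / 2 ≤ log x := by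
  have h := sinh_le_self_iff.mpr (log_nonpos hx0.le hx1)
  rwa [sinh_eq, exp_neg, exp_log hx0] at h

theorem sub_one_add_mul_log_one_add_le {a : ℝ} (ha0 : 0 < a) (ha1 : a ≤ 1) :
    a - (1 + a) * log (1 + a) ≤ -(a ^ 2 / 3) := by
  have hlog := mul_le_mul_of_nonneg_left (two_mul_div_two_add_le_log_one_add ha0)
    (by linarith : (0 : ℝ) ≤ 1 + a)
  have hrat : a + a ^ 2 / 3 ≤ (1 + a) * (2 * a / (2 + a)) := by
    rw [mul_div_assoc', le_div_iff₀ (by linarith)]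
    nlinarith [mul_nonneg (sq_nonneg a) (by linarith : (0 : ℝ) ≤ 1 - a)]
  linarith

theorem neg_sub_one_sub_mul_log_one_sub_le {a : ℝ} (ha0 : 0 ≤ a) (ha1 : a < 1) :
    -a - (1 - a) * log (1 - a) ≤ -(a ^ 2 / 2) := by
  have h1a : 0 < 1 - a := by linarith
  have hlog := mul_le_mul_of_nonneg_left (sub_inv_div_two_le_log h1a (by linarith)) h1a.le
  have hrat : (1 - a) * ((1 - a - (1 - a)⁻¹) / 2) = -a + a ^ 2 / 2 := by
    field_simp
    ring
  linarith

end Real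

section PastSigma

variable {Ω β : Type*} [MeasurableSpace β]

abbrev pastSigma (X : ℕ → Ω → β) (i : ℕ) : MeasurableSpace Ω :=
  ⨆ j : {j : ℕ // j < i}, MeasurableSpace.comap (X j) inferInstance

theorem measurable_pastSigma {X : ℕ → Ω → β} {i j : ℕ} (hj : j < i) :
    Measurable[pastSigma X i] (X j) :=
  measurable_iff_comap_le.mpr (le_iSup_of_le (⟨j, hj⟩ : {k // k < i}) le_rfl)

theorem pastSigma_le [m : MeasurableSpace Ω] {X : ℕ → Ω → β} {i : ℕ}
    (hX : ∀ j < i, Measurable (X j)) : pastSigma X i ≤ m :=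
  iSup_le fun j => (hX j j.2).comap_le

end PastSigma

theorem integral_mul_one_add_mul_le_of_condExp {Ω : Type*} {m m₀ : MeasurableSpace Ω}
    {μ : Measure Ω} (hm : m ≤ m₀) [SigmaFinite (μ.trim hm)] {Z Y : Ω → ℝ} {c r : ℝ}
    (hZm : StronglyMeasurable[m] Z) (hZ0 : ∀ᵐ ω ∂μ, 0 ≤ Z ω) (hZ : Integrable Z μ)
    (hY : Integrable Y μ) (hZY : Integrable (fun ω => Z ω * Y ω) μ)
    (hcond : ∀ᵐ ω ∂μ, c * μ[Y | m] ω ≤ c * r) :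
    ∫ ω, Z ω * (1 + c * Y ω) ∂μ ≤ (1 + c * r) * ∫ ω, Z ω ∂μ := by
  have hpull : μ[Z * Y | m] =ᵐ[μ] Z * μ[Y | m] := condExp_mul_of_stronglyMeasurable_left hZm hZY hY
  have hZE : Integrable (Z * μ[Y | m]) μ := integrable_condExp.congr hpull
  have htower : ∫ ω, Z ω * Y ω ∂μ = ∫ ω, Z ω * μ[Y | m] ω ∂μ :=
    (integral_condExp hm).symm.trans (integral_congr_ae hpull)
  calc ∫ ω, Z ω * (1 + c * Y ω) ∂μ = ∫ ω, (Z ω + c * (Z ω * Y ω)) ∂μ :=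
        integral_congr_ae (ae_of_all _ fun ω => by ring)
    _ = ∫ ω, Z ω ∂μ + ∫ ω, Z ω * (c * μ[Y | m] ω) ∂μ := by
        rw [integral_add hZ (hZY.const_mul c), integral_const_mul, htower, ← integral_const_mul]
        simp only [mul_left_comm c]
    _ ≤ ∫ ω, Z ω ∂μ + ∫ ω, Z ω * (c * r) ∂μ := by
        refine add_le_add le_rfl (integral_mono_ae ?_ (hZ.mul_const _) ?_)
        · exact (hZE.const_mul c).congr (ae_of_all _ fun ω => by simp only [Pi.mul_apply]; ring)
        · filter_upwards [hZ0, hcond] with ω hZω hω using mul_le_mul_of_nonneg_left hω hZω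
    _ = (1 + c * r) * ∫ ω, Z ω ∂μ := by rw [integral_mul_const]; ring

section ConditionalChernoff

variable {Ω : Type*} {n : ℕ} {X : ℕ → Ω → ℝ}

theorem mem_Icc_of_eq_zero_or_eq_one {x : ℝ} (hx : x = 0 ∨ x = 1) : x ∈ Set.Icc (0 : ℝ) 1 := by
  rcases hx with rfl | rfl <;> simp

theorem exp_mul_eq_one_add_of_eq_zero_or_eq_one {x : ℝ} (t : ℝ) (hx : x = 0 ∨ x = 1) :
    exp (t * x) = 1 + (exp t - 1) * x := by
  rcases hx with rfl | rfl <;> simp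

theorem sum_range_mem_Icc (hX : ∀ i < n, ∀ ω, X i ω ∈ Set.Icc 0 1) (ω : Ω) :
    ∑ i ∈ range n, X i ω ∈ Set.Icc 0 (n : ℝ) := by
  refine ⟨sum_nonneg fun i hi => (hX i (mem_range.mp hi) ω).1, ?_⟩
  simpa using sum_le_sum fun i hi => (hX i (mem_range.mp hi) ω).2

variable [MeasurableSpace Ω] {μ : Measure Ω}

theorem integrable_exp_mul_sum_range [IsFiniteMeasure μ] (hX : ∀ i < n, ∀ ω, X i ω ∈ Set.Icc 0 1)
    (hXmeas : ∀ i < n, Measurable (X i)) (t : ℝ) :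
    Integrable (fun ω => exp (t * ∑ i ∈ range n, X i ω)) μ :=
  integrable_exp_mul_of_mem_Icc
    (Finset.measurable_sum _ fun i hi => hXmeas i (mem_range.mp hi)).aemeasurable
    (ae_of_all _ (sum_range_mem_Icc hX))

theorem mgf_sum_range_le_of_condExp [IsProbabilityMeasure μ]
    (hX01 : ∀ i < n, ∀ ω, X i ω = 0 ∨ X i ω = 1) (hXmeas : ∀ i < n, Measurable (X i)) {t r : ℝ}
    (hcond : ∀ i < n, ∀ᵐ ω ∂μ, (exp t - 1) * μ[X i | pastSigma X i] ω ≤ (exp t - 1) * r) :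
    mgf (fun ω => ∑ i ∈ range n, X i ω) μ t ≤ exp (n * ((exp t - 1) * r)) := by
  induction n with
  | zero => simp [mgf]
  | succ n ih =>
    have hlt : ∀ i < n, i < n + 1 := fun i hi => hi.trans n.lt_succ_self
    specialize ih (fun i hi => hX01 i (hlt i hi)) (fun i hi => hXmeas i (hlt i hi))
      (fun i hi => hcond i (hlt i hi))
    have hX i hi ω : X i ω ∈ Set.Icc (0 : ℝ) 1 := mem_Icc_of_eq_zero_or_eq_one (hX01 i hi ω)
    set Z := fun ω => exp (t * ∑ i ∈ range n, X i ω)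
    have hZm : StronglyMeasurable[pastSigma X n] Z :=
      ((Finset.measurable_sum _ fun i hi => measurable_pastSigma (mem_range.mp hi)).const_mul
        t).exp.stronglyMeasurable
    have hZ : Integrable Z μ :=
      integrable_exp_mul_sum_range (fun i hi => hX i (hlt i hi)) (fun i hi => hXmeas i (hlt i hi)) t
    have hXn : Integrable (X n) μ :=
      .of_mem_Icc 0 1 (hXmeas n n.lt_succ_self).aemeasurable (ae_of_all _ (hX n n.lt_succ_self))
    have hZX : Integrable (fun ω => Z ω * X n ω) μ :=
      hZ.mul_bdd (c := 1) hXn.aestronglyMeasurable (ae_of_all _ fun ω => by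
        rcases hX01 n n.lt_succ_self ω with h | h <;> simp [h])
    have hstep := integral_mul_one_add_mul_le_of_condExp
      (pastSigma_le fun j hj => hXmeas j (hlt j hj)) hZm (ae_of_all _ fun ω => (exp_pos _).le)
      hZ hXn hZX (hcond n n.lt_succ_self)
    calc mgf (fun ω => ∑ i ∈ range (n + 1), X i ω) μ t
        = ∫ ω, Z ω * (1 + (exp t - 1) * X n ω) ∂μ := by
          simp only [mgf, sum_range_succ, mul_add, exp_add, Z,
            exp_mul_eq_one_add_of_eq_zero_or_eq_one t (hX01 n n.lt_succ_self _)]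
      _ ≤ (1 + (exp t - 1) * r) * mgf (fun ω => ∑ i ∈ range n, X i ω) μ t := hstep
      _ ≤ exp ((exp t - 1) * r) * exp (n * ((exp t - 1) * r)) :=
          mul_le_mul (by linarith [add_one_le_exp ((exp t - 1) * r)]) ih mgf_nonneg (exp_pos _).le
      _ = exp ((n + 1 : ℕ) * ((exp t - 1) * r)) := by rw [← exp_add]; push_cast; ring_nf

theorem measureReal_le_sum_range_le_of_condExp [IsProbabilityMeasure μ]
    (hX01 : ∀ i < n, ∀ ω, X i ω = 0 ∨ X i ω = 1) (hXmeas : ∀ i < n, Measurable (X i)) {t r : ℝ}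
    (ht : 0 ≤ t)
    (hcond : ∀ i < n, ∀ᵐ ω ∂μ, (exp t - 1) * μ[X i | pastSigma X i] ω ≤ (exp t - 1) * r)
    (a : ℝ) :
    μ.real {ω | a ≤ ∑ i ∈ range n, X i ω} ≤ exp (-t * a + n * ((exp t - 1) * r)) := by
  have hX i hi ω : X i ω ∈ Set.Icc (0 : ℝ) 1 := mem_Icc_of_eq_zero_or_eq_one (hX01 i hi ω)
  rw [exp_add]
  exact (measure_ge_le_exp_mul_mgf a ht (integrable_exp_mul_sum_range hX hXmeas t)).trans
    (mul_le_mul_of_nonneg_left (mgf_sum_range_le_of_condExp hX01 hXmeas hcond) (exp_pos _).le)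

theorem measureReal_sum_range_le_le_of_condExp [IsProbabilityMeasure μ]
    (hX01 : ∀ i < n, ∀ ω, X i ω = 0 ∨ X i ω = 1) (hXmeas : ∀ i < n, Measurable (X i)) {t r : ℝ}
    (ht : t ≤ 0)
    (hcond : ∀ i < n, ∀ᵐ ω ∂μ, (exp t - 1) * μ[X i | pastSigma X i] ω ≤ (exp t - 1) * r)
    (a : ℝ) :
    μ.real {ω | ∑ i ∈ range n, X i ω ≤ a} ≤ exp (-t * a + n * ((exp t - 1) * r)) := by
  have hX i hi ω : X i ω ∈ Set.Icc (0 : ℝ) 1 := mem_Icc_of_eq_zero_or_eq_one (hX01 i hi ω)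
  rw [exp_add]
  exact (measure_le_le_exp_mul_mgf a ht (integrable_exp_mul_sum_range hX hXmeas t)).trans
    (mul_le_mul_of_nonneg_left (mgf_sum_range_le_of_condExp hX01 hXmeas hcond) (exp_pos _).le)

end ConditionalChernoff

theorem chernoff_conditional_general
    {Ω : Type*} [MeasurableSpace Ω] (μ : Measure Ω) [IsProbabilityMeasure μ]
    (n : ℕ) (X : ℕ → Ω → ℝ)
    (hX01 : ∀ i < n, ∀ ω, X i ω = 0 ∨ X i ω = 1)
    (hXmeas : ∀ i < n, Measurable (X i))
    (p q : ℝ) (hp0 : 0 ≤ p) (hq0 : 0 ≤ q)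
    (hlow : ∀ i < n, ∀ᵐ ω ∂μ,
      p ≤ (μ[X i | ⨆ j : {j : ℕ // j < i}, MeasurableSpace.comap (X j) inferInstance]) ω)
    (hhigh : ∀ i < n, ∀ᵐ ω ∂μ,
      (μ[X i | ⨆ j : {j : ℕ // j < i}, MeasurableSpace.comap (X j) inferInstance]) ω ≤ q)
    (α : ℝ) (hα0 : 0 < α) (hα1 : α < 1) :
    (μ {ω | (1 + α) * n * q ≤ ∑ i ∈ Finset.range n, X i ω}).toReal ≤
        Real.exp (-(α ^ 2 * n * q) / 3) ∧
      (μ {ω | ∑ i ∈ Finset.range n, X i ω ≤ (1 - α) * n * p}).toReal ≤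
        Real.exp (-(α ^ 2 * n * p) / 2) := by
  constructor
  · have hc : exp (log (1 + α)) - 1 = α := by rw [exp_log (by linarith)]; ring
    refine (measureReal_le_sum_range_le_of_condExp (t := log (1 + α)) (r := q) hX01 hXmeas
      (log_nonneg (by linarith)) (fun i hi => ?_) _).trans (exp_le_exp.mpr ?_)
    · filter_upwards [hhigh i hi] with ω hω
      rw [hc]
      exact mul_le_mul_of_nonneg_left hω hα0.le
    · rw [hc]
      linarith [mul_le_mul_of_nonneg_left (sub_one_add_mul_log_one_add_le hα0 hα1.le)
        (by positivity : (0 : ℝ) ≤ n * q)]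
  · have hc : exp (log (1 - α)) - 1 = -α := by rw [exp_log (by linarith)]; ring
    refine (measureReal_sum_range_le_le_of_condExp (t := log (1 - α)) (r := p) hX01 hXmeas
      (log_nonpos (by linarith) (by linarith)) (fun i hi => ?_) _).trans (exp_le_exp.mpr ?_)
    · filter_upwards [hlow i hi] with ω hω
      rw [hc]
      exact mul_le_mul_of_nonpos_left hω (by linarith)
    · rw [hc]
      linarith [mul_le_mul_of_nonneg_left (neg_sub_one_sub_mul_log_one_sub_le hα0.le hα1)
        (by positivity : (0 : ℝ) ≤ n * p)]

/-- **Lemma (Chernoff bound with conditional expectations).** Let `X₁, …, Xₙ` be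
`{0,1}`-valued random variables and `X = ∑ Xᵢ`. If, for each `i`, the
conditional expectation of `Xᵢ` given `X₁, …, X_{i-1}` is a.s. at least `p` and
at most `q`, then for every `0 < α < 1`,
`Pr[X ≥ (1+α)nq] ≤ exp(-α²nq/3)` and `Pr[X ≤ (1-α)np] ≤ exp(-α²np/2)`. -/
theorem chernoff_conditional
    {Ω : Type*} [MeasurableSpace Ω] (μ : Measure Ω) [IsProbabilityMeasure μ]
    (n : ℕ) (X : ℕ → Ω → ℝ)
    (hX01 : ∀ i < n, ∀ ω, X i ω = 0 ∨ X i ω = 1)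
    (hXmeas : ∀ i < n, Measurable (X i))
    (p q : ℝ) (hp0 : 0 ≤ p) (hp1 : p ≤ 1) (hq0 : 0 ≤ q) (hq1 : q ≤ 1)
    (hlow : ∀ i < n, ∀ᵐ ω ∂μ,
      p ≤ (μ[X i | ⨆ j : {j : ℕ // j < i}, MeasurableSpace.comap (X j) inferInstance]) ω)
    (hhigh : ∀ i < n, ∀ᵐ ω ∂μ,
      (μ[X i | ⨆ j : {j : ℕ // j < i}, MeasurableSpace.comap (X j) inferInstance]) ω ≤ q)
    (α : ℝ) (hα0 : 0 < α) (hα1 : α < 1) :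
    (μ {ω | (1 + α) * n * q ≤ ∑ i ∈ Finset.range n, X i ω}).toReal ≤
        Real.exp (-(α ^ 2 * n * q) / 3) ∧
      (μ {ω | ∑ i ∈ Finset.range n, X i ω ≤ (1 - α) * n * p}).toReal ≤
        Real.exp (-(α ^ 2 * n * p) / 2) :=
  chernoff_conditional_general μ n X hX01 hXmeas p q hp0 hq0 hlow hhigh α hα0 hα1
end

section
/- Let G be a graph on n vertices with maximum degree at most Δ, where Δ ≥ 2, and let d be a positive integer such that d·n ≥ 2|E(G)|. Then for any positive integer k, G contains a k-independent set U consisting of vertices of degree at most d in G, with |U| ≥ n/((d+1)·d·Δ^k). -/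
open Filter
attribute [local instance] Classical.propDecidable

/-- Number of edges of a simple graph (no decidability assumptions needed). -/
noncomputable def edgeCount {V : Type*} (G : SimpleGraph V) : ℕ := Nat.card G.edgeSet

/-- A set `S` is `k`-independent in `G`: any two distinct vertices of `S` are at
distance at least `k+1` (every walk between them has length greater than `k`). -/
def KIndep {V : Type*} (G : SimpleGraph V) (k : ℕ) (S : Set V) : Prop :=
  ∀ u ∈ S, ∀ v ∈ S, u ≠ v → ∀ W : G.Walk u v, k < W.length

/-!
Let `D` be the set of vertices of degree at most `d`. Since the degrees sum to `2|E| ≤ d n`,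
fewer than `d n / (d + 1)` vertices have degree above `d`, so `n ≤ (d + 1) |D|`. A maximal
`k`-independent subset `U` of `D` covers `D` by the balls of radius `k` around its points, and
a ball of radius `k` around a vertex of degree at most `d` has at most
`1 + d (1 + Δ + ⋯ + Δ^(k-1)) ≤ d Δ^k` vertices. Hence `n ≤ (d + 1) d Δ^k |U|`.
-/

open Finset SimpleGraph

theorem KIndep.insert {V : Type*} {G : SimpleGraph V} {k : ℕ} {S : Set V} {w : V}
    (hS : KIndep G k S) (hw : ∀ u ∈ S, ∀ p : G.Walk u w, k < p.length) :
    KIndep G k (insert w S) := by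
  rintro u (rfl | hu) v (rfl | hv) huv p
  · exact absurd rfl huv
  · simpa using hw v hv p.reverse
  · exact hw u hu p
  · exact hS u hu v hv huv p

namespace SimpleGraph

variable {V : Type*} {G : SimpleGraph V}

theorem edgeCount_eq_card_edgeFinset [Fintype G.edgeSet] : edgeCount G = #G.edgeFinset := by
  rw [edgeCount, Nat.card_eq_fintype_card, edgeFinset_card]

variable [Fintype V]

theorem card_le_succ_mul_card_filter_degree_le [DecidableRel G.Adj] {d : ℕ}
    (hedges : 2 * #G.edgeFinset ≤ d * Fintype.card V) :
    Fintype.card V ≤ (d + 1) * #{v | G.degree v ≤ d} := by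
  have hlarge : (d + 1) * #{v | ¬G.degree v ≤ d} ≤ 2 * #G.edgeFinset := by
    rw [← sum_degrees_eq_twice_card_edges, mul_comm, ← smul_eq_mul]
    refine (card_nsmul_le_sum _ _ _ fun v hv => ?_).trans
      (sum_le_univ_sum_of_nonneg fun _ => Nat.zero_le _)
    simp only [mem_filter, mem_univ, true_and] at hv
    omega
  have hsplit := card_filter_add_card_filter_not (s := univ) (fun v => G.degree v ≤ d)
  rw [card_univ] at hsplit
  nlinarith

variable (G) in
noncomputable def walkBall (u : V) (r : ℕ) : Finset V :=
  {v | ∃ p : G.Walk u v, p.length ≤ r}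

theorem mem_walkBall {u v : V} {r : ℕ} :
    v ∈ G.walkBall u r ↔ ∃ p : G.Walk u v, p.length ≤ r := by
  simp [walkBall]

theorem walkBall_zero (u : V) : G.walkBall u 0 = {u} := by
  ext v
  simp only [mem_walkBall, Nat.le_zero, mem_singleton]
  exact ⟨fun ⟨p, hp⟩ => (Walk.eq_of_length_eq_zero hp).symm, fun h => h ▸ ⟨.nil, rfl⟩⟩

theorem walkBall_succ_subset [DecidableRel G.Adj] (u : V) (r : ℕ) :
    G.walkBall u (r + 1) ⊆ insert u ((G.neighborFinset u).biUnion (G.walkBall · r)) := by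
  intro v hv
  obtain ⟨p, hp⟩ := mem_walkBall.1 hv
  cases p with
  | nil => exact mem_insert_self _ _
  | cons h q =>
    exact mem_insert_of_mem <| mem_biUnion.2
      ⟨_, (G.mem_neighborFinset _ _).2 h, mem_walkBall.2 ⟨q, by simpa using hp⟩⟩

theorem card_walkBall_succ_le [DecidableRel G.Adj] {u : V} {c b r : ℕ} (hu : G.degree u ≤ c)
    (hb : ∀ w, #(G.walkBall w r) ≤ b) : #(G.walkBall u (r + 1)) ≤ c * b + 1 :=
  calc #(G.walkBall u (r + 1))
      ≤ #((G.neighborFinset u).biUnion (G.walkBall · r)) + 1 :=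
        (card_le_card (walkBall_succ_subset u r)).trans (card_insert_le _ _)
    _ ≤ G.degree u * b + 1 := by
        gcongr
        exact card_biUnion_le_card_mul _ _ _ fun w _ => hb w
    _ ≤ c * b + 1 := by gcongr

theorem card_walkBall_lt_pow [DecidableRel G.Adj] {Δ : ℕ} (hΔ : 2 ≤ Δ)
    (hmax : ∀ v, G.degree v ≤ Δ) (u : V) (r : ℕ) : #(G.walkBall u r) < Δ ^ (r + 1) := by
  induction r generalizing u with
  | zero => simp only [walkBall_zero, card_singleton, zero_add, pow_one]; omega
  | succ r ih =>
    obtain ⟨m, hm⟩ : ∃ m, Δ ^ (r + 1) = m + 1 :=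
      ⟨_, (Nat.succ_pred_eq_of_pos (by positivity)).symm⟩
    have hball := card_walkBall_succ_le (hmax u) fun w => Nat.le_of_lt_succ (hm ▸ ih w)
    rw [pow_succ, hm]
    -- `Δ m + 1 < Δ (m + 1)` as `Δ ≥ 2`
    nlinarith

theorem card_walkBall_le [DecidableRel G.Adj] {Δ d : ℕ} (hΔ : 2 ≤ Δ) (hd : 1 ≤ d)
    (hmax : ∀ v, G.degree v ≤ Δ) {u : V} (hu : G.degree u ≤ d) (r : ℕ) :
    #(G.walkBall u r) ≤ d * Δ ^ r := by
  cases r with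
  | zero => simpa [walkBall_zero] using hd
  | succ r =>
    obtain ⟨m, hm⟩ : ∃ m, Δ ^ (r + 1) = m + 1 :=
      ⟨_, (Nat.succ_pred_eq_of_pos (by positivity)).symm⟩
    have hball := card_walkBall_succ_le hu fun w =>
      Nat.le_of_lt_succ (hm ▸ card_walkBall_lt_pow hΔ hmax w r)
    rw [hm]
    nlinarith

variable (G) in
theorem exists_kIndep_subset_subset_biUnion_walkBall (k : ℕ) (D : Finset V) :
    ∃ U ⊆ D, KIndep G k (U : Set V) ∧ D ⊆ U.biUnion (G.walkBall · k) := by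
  obtain ⟨U, hUmem, hmax⟩ :=
    (D.powerset.filter fun U : Finset V => KIndep G k U).exists_maximal ⟨∅, by simp [KIndep]⟩
  simp only [mem_filter, mem_powerset] at hUmem hmax
  obtain ⟨hUD, hU⟩ := hUmem
  refine ⟨U, hUD, hU, fun w hw => ?_⟩
  by_cases hwU : w ∈ U
  · exact mem_biUnion.2 ⟨w, hwU, mem_walkBall.2 ⟨.nil, Nat.zero_le _⟩⟩
  by_contra hcover
  have hfar : ∀ u ∈ (U : Set V), ∀ p : G.Walk u w, k < p.length := fun u hu p =>
    lt_of_not_ge fun hp => hcover (mem_biUnion.2 ⟨u, hu, mem_walkBall.2 ⟨p, hp⟩⟩)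
  have hins := hmax (y := insert w U) ⟨insert_subset hw hUD, by simpa using hU.insert hfar⟩
    (subset_insert _ _)
  exact hwU (hins (mem_insert_self _ _))

end SimpleGraph

theorem exists_kIndep_set_of_small_degree_vertices_general
    {V : Type*} [Fintype V] (G : SimpleGraph V) (Δ d k : ℕ)
    (hΔ : 2 ≤ Δ) (hd : 1 ≤ d)
    (hmax : ∀ v : V, Nat.card (G.neighborSet v) ≤ Δ)
    (hEdges : 2 * edgeCount G ≤ d * Fintype.card V) :
    ∃ U : Finset V, KIndep G k (U : Set V) ∧
      (∀ v ∈ U, Nat.card (G.neighborSet v) ≤ d) ∧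
      (Fintype.card V : ℝ) / (((d : ℝ) + 1) * (d : ℝ) * (Δ : ℝ) ^ k) ≤ (U.card : ℝ) := by
  have hdeg (v : V) : Nat.card (G.neighborSet v) = G.degree v := by
    rw [Nat.card_eq_fintype_card, card_neighborSet_eq_degree]
  simp only [hdeg] at hmax ⊢
  obtain ⟨U, hUD, hU, hcover⟩ :=
    exists_kIndep_subset_subset_biUnion_walkBall G k {v | G.degree v ≤ d}
  have hUdeg (v : V) (hv : v ∈ U) : G.degree v ≤ d := (mem_filter.1 (hUD hv)).2
  have hcard : Fintype.card V ≤ #U * ((d + 1) * d * Δ ^ k) :=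
    calc Fintype.card V ≤ (d + 1) * #{v | G.degree v ≤ d} :=
          card_le_succ_mul_card_filter_degree_le <|
            edgeCount_eq_card_edgeFinset (G := G) ▸ hEdges
      _ ≤ (d + 1) * (#U * (d * Δ ^ k)) := by
          gcongr
          exact (card_le_card hcover).trans <| card_biUnion_le_card_mul _ _ _ fun u hu =>
            card_walkBall_le hΔ hd hmax (hUdeg u hu) k
      _ = #U * ((d + 1) * d * Δ ^ k) := by ring
  refine ⟨U, hU, hUdeg, ?_⟩
  have hΔpos : (0 : ℝ) < Δ := by exact_mod_cast (by omega : 0 < Δ)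
  have hdpos : (0 : ℝ) < d := by exact_mod_cast hd
  rw [div_le_iff₀ (by positivity)]
  exact_mod_cast hcard

/-- **Lemma 6 (independent sets made of small-degree vertices).** If `G` is a graph on
`n` vertices with maximum degree at most `Δ ≥ 2` and `d·n ≥ 2·|E(G)|`, then for
every positive integer `k` there is a `k`-independent set `U` of vertices of
degree at most `d` with `|U| ≥ n / ((d+1)·d·Δ^k)`. -/
theorem exists_kIndep_set_of_small_degree_vertices
    {V : Type*} [Fintype V] (G : SimpleGraph V) (Δ d k : ℕ)
    (hΔ : 2 ≤ Δ) (hd : 1 ≤ d) (hk : 1 ≤ k)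
    (hmax : ∀ v : V, Nat.card (G.neighborSet v) ≤ Δ)
    (hEdges : 2 * edgeCount G ≤ d * Fintype.card V) :
    ∃ U : Finset V, KIndep G k (U : Set V) ∧
      (∀ v ∈ U, Nat.card (G.neighborSet v) ≤ d) ∧
      (Fintype.card V : ℝ) / (((d : ℝ) + 1) * (d : ℝ) * (Δ : ℝ) ^ k) ≤ (U.card : ℝ) :=
  exists_kIndep_set_of_small_degree_vertices_general G Δ d k hΔ hd hmax hEdges
end
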